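/- Fix uniform bids b_{ij} = α_i v_{ij} with multipliers α_i ≥ 1, and fix an allocation a valid under b. Then there exists an optimal allocation a^opt with respect to the true valuations such that the VCG revenue satisfies Rev^VCG(a, b) ≥ Σ_{k=1}^{K} (c_k − c_{k+1}) · [ Σ_{(i,j) ∈ S_k(a^opt) \ S_k(a)} v_{ij} ]. -/

import Mathlib

open Finset MeasureTheory

namespace SponsoredShopping

noncomputable section

/-- An item is a pair `(i, j)`: bidder `i`'s `j`-th item. -/
abbrev Item (n m : ℕ) : Type := Fin n × Fin m

/-- An allocation assigns to each rank `k` (0-based) an item. -/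
abbrev Alloc (n m : ℕ) : Type := Fin (n * m) ≃ Item n m

/-- Maximum of `f` over a finite set, with value `0` on the empty set. -/
def fmax {ι : Type*} (s : Finset ι) (f : ι → ℝ) : ℝ :=
  WithBot.unbotD 0 (s.sup fun i => (f i : WithBot ℝ))

variable {n m : ℕ}

/-- An allocation is valid under bids `b` if bids are nonincreasing along ranks. -/
def ValidUnder (b : Item n m → ℝ) (a : Alloc n m) : Prop :=
  ∀ k k' : Fin (n * m), k ≤ k' → b (a k') ≤ b (a k)

/-- The value of bidder `i` under allocation `a`
(`c k` is the CTR of slot `k`, with `c k = 0` for `k ≥ K`). -/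
def bidderValue (c : ℕ → ℝ) (v : Item n m → ℝ) (a : Alloc n m) (i : Fin n) : ℝ :=
  ∑ k : Fin (n * m), if (a k).1 = i then c k * v (a k) else 0

/-- Social welfare of an allocation. -/
def wel (c : ℕ → ℝ) (v : Item n m → ℝ) (a : Alloc n m) : ℝ :=
  ∑ k : Fin (n * m), c k * v (a k)

/-- Optimal social welfare. -/
def welOpt (c : ℕ → ℝ) (v : Item n m → ℝ) : ℝ :=
  fmax (univ : Finset (Alloc n m)) (wel c v)

/-- GSP per-click price of the item ranked `k`: highest bid among lower-ranked
items belonging to other bidders (`0` if none). -/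
def gspPrice (b : Item n m → ℝ) (a : Alloc n m) (k : Fin (n * m)) : ℝ :=
  fmax (univ.filter fun k' : Fin (n * m) => k < k' ∧ (a k').1 ≠ (a k).1)
    (fun k' => b (a k'))

/-- Total GSP payment of bidder `i`. -/
def gspPay (c : ℕ → ℝ) (b : Item n m → ℝ) (a : Alloc n m) (i : Fin n) : ℝ :=
  ∑ k : Fin (n * m), if (a k).1 = i then c k * gspPrice b a k else 0

/-- Bid-welfare of an allocation. -/
def bidWelfare (c : ℕ → ℝ) (b : Item n m → ℝ) (a : Alloc n m) : ℝ :=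
  ∑ k : Fin (n * m), c k * b (a k)

/-- Bids with bidder `i`'s bids zeroed out. -/
def exclBids (b : Item n m → ℝ) (i : Fin n) : Item n m → ℝ :=
  fun x => if x.1 = i then 0 else b x

/-- Bid-welfare obtained by bidders other than `i` in allocation `a`. -/
def othersWelfare (c : ℕ → ℝ) (b : Item n m → ℝ) (a : Alloc n m) (i : Fin n) : ℝ :=
  ∑ k : Fin (n * m), if (a k).1 ≠ i then c k * b (a k) else 0

/-- Optimal counterfactual bid-welfare without bidder `i`. -/
def woptWithout (c : ℕ → ℝ) (b : Item n m → ℝ) (i : Fin n) : ℝ :=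
  fmax (univ : Finset (Alloc n m)) (fun a' => bidWelfare c (exclBids b i) a')

/-- VCG payment of bidder `i`. -/
def vcgPay (c : ℕ → ℝ) (b : Item n m → ℝ) (a : Alloc n m) (i : Fin n) : ℝ :=
  woptWithout c b i - othersWelfare c b a i

/-- The two mechanisms considered. -/
inductive Mech | gsp | vcg

/-- Payment of bidder `i` under mechanism `M`. -/
def pay : Mech → (ℕ → ℝ) → (Item n m → ℝ) → Alloc n m → Fin n → ℝ
  | .gsp => gspPay
  | .vcg => vcgPay

/-- `S_k(a)`: the set of items assigned to the first `k` slots in `a`. -/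
def topk (a : Alloc n m) (k : ℕ) : Finset (Item n m) :=
  (univ.filter fun r : Fin (n * m) => (r : ℕ) < k).image a

/-!
Let `a^opt` be the stable re-sort of `a` by true value. Since bids are `α_i`-multiples of values,
`a` already lists each bidder's items in value order, so `a^opt` keeps every bidder's items in their
`a`-order. Removing bidder `i` and moving the others up in `a`'s order is a feasible counterfactual,
so `P_i ≥ Σ_s (c_{r_i(s)} - c_s) b_s` with `r_i(s)` the rank of `s` among the other bidders'
items; telescoping, this is `Σ_t (c_t - c_{t+1})` times the bids of the items that climb into the
top `t + 1` slots when `i` leaves. For each `t` these dominate the bids of the displaced items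
`S_{t+1}(a^opt) \ S_{t+1}(a)`: bids decrease along `a`, so by Abel summation it suffices to compare
counts on every prefix of `a`. There a bidder owning no displaced item lets at least
`min(#displaced, its share of S_{t+1}(a))` items climb, and the shares of these bidders add up to
at least `#displaced`: a bidder owning a displaced item keeps its items of `S_{t+1}(a)` inside
`S_{t+1}(a^opt)`, which has room for only `t + 1` items. Finally values are at most bids.
-/

theorem sum_mul_le_sum_mul_of_prefix_sum_le {ι : Type*} [LinearOrder ι] (s : Finset ι)
    {f g β : ι → ℝ} (hβ : Antitone β) (hβ0 : ∀ x ∈ s, 0 ≤ β x)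
    (h : ∀ x ∈ s, ∑ y ∈ s with y ≤ x, f y ≤ ∑ y ∈ s with y ≤ x, g y) :
    ∑ y ∈ s, f y * β y ≤ ∑ y ∈ s, g y * β y := by
  classical
  induction s using Finset.induction_on_max generalizing β with
  | empty => simp
  | insert a s ha ih =>
    have hnot : a ∉ s := fun has => lt_irrefl a (ha a has)
    -- subtract the last weight `β a`: the rest is a shorter instance, the remainder a total sum
    have hprefix : ∀ x ∈ s, {y ∈ insert a s | y ≤ x} = {y ∈ s | y ≤ x} := fun x hx => by
      rw [filter_insert, if_neg (not_le.2 (ha x hx))]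
    have hshort := ih (β := fun y => β y - β a) (fun x y hxy => sub_le_sub_right (hβ hxy) _)
      (fun x hx => sub_nonneg.2 (hβ (ha x hx).le))
      (fun x hx => by simpa only [hprefix x hx] using h x (mem_insert_of_mem hx))
    have htotal : ∑ y ∈ insert a s, f y ≤ ∑ y ∈ insert a s, g y := by
      have := h a (mem_insert_self a s)
      rwa [filter_true_of_mem fun y hy => (mem_insert.1 hy).elim le_of_eq fun hy => (ha y hy).le]
        at this
    have hsplit : ∀ φ : ι → ℝ, ∑ y ∈ insert a s, φ y * β y
        = ∑ y ∈ s, φ y * (β y - β a) + (∑ y ∈ insert a s, φ y) * β a := fun φ => by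
      rw [sum_insert hnot, sum_insert hnot, add_mul, sum_mul]
      simp only [mul_sub, sum_sub_distrib]
      ring
    rw [hsplit f, hsplit g]
    exact add_le_add hshort (mul_le_mul_of_nonneg_right htotal (hβ0 a (mem_insert_self a s)))

theorem card_filter_card_filter_lt_lt {ι : Type*} [LinearOrder ι] (T : Finset ι) (k : ℕ) :
    #{s ∈ T | #{s' ∈ T | s' < s} < k} = min #T k := by
  classical
  induction T using Finset.induction_on_max with
  | empty => simp
  | insert a T ha ih =>
    have hnot : a ∉ T := fun h => lt_irrefl a (ha a h)
    have hpred : ∀ s ∈ T, {s' ∈ insert a T | s' < s} = {s' ∈ T | s' < s} := fun s hs => by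
      rw [filter_insert, if_neg (not_lt.2 (ha s hs).le)]
    have hpred_a : {s' ∈ insert a T | s' < a} = T := by
      rw [filter_insert, if_neg (lt_irrefl a), filter_true_of_mem ha]
    rw [filter_insert, hpred_a, filter_congr (fun s hs => by rw [hpred s hs]),
      card_insert_of_notMem hnot]
    split_ifs with h
    · rw [card_insert_of_notMem (fun h' => hnot (mem_filter.1 h').1), ih]; omega
    · rw [ih]; omega

theorem min_sum_le_sum_min {ι : Type*} (s : Finset ι) (f : ι → ℕ) (q : ℕ) :
    min q (∑ i ∈ s, f i) ≤ ∑ i ∈ s, min q (f i) := by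
  classical
  induction s using Finset.induction_on with
  | empty => simp
  | insert a s ha ih => rw [sum_insert ha, sum_insert ha]; omega

theorem sort_symm_lt_iff {N : ℕ} {α : Type*} [LinearOrder α] (f : Fin N → α) (p q : Fin N) :
    (Tuple.sort f).symm p < (Tuple.sort f).symm q ↔ f p < f q ∨ f p = f q ∧ p < q := by
  rw [← (Tuple.eq_sort_iff'.1 (rfl : Tuple.sort f = _)).lt_iff_lt]
  simp only [Equiv.trans_apply, Equiv.apply_symm_apply, Tuple.graphEquiv₁, Equiv.coe_fn_mk]
  exact Prod.Lex.lt_iff (x := toLex (f p, p)) (y := toLex (f q, q))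

theorem val_eq_card_filter_lt {N : ℕ} (τ : Equiv.Perm (Fin N)) (s : Fin N) :
    (τ s : ℕ) = #{s' | τ s' < τ s} := by
  rw [← Fin.card_Iio]
  exact (card_equiv τ fun s' => by simp).symm

theorem sum_Ico_sub_succ (c : ℕ → ℝ) {a b : ℕ} (h : a ≤ b) :
    ∑ t ∈ Ico a b, (c t - c (t + 1)) = c a - c b := by
  simpa only [neg_sub_neg] using sum_Ico_sub (fun t => -c t) h

section Ranks

variable {N : ℕ} {ι : Type*} [DecidableEq ι]

def rankWithout (own : Fin N → ι) (i : ι) (s : Fin N) : ℕ :=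
  #{s' | s' < s ∧ own s' ≠ i}

def climbers (own : Fin N → ι) (i : ι) (t : ℕ) : Finset (Fin N) :=
  {s | own s ≠ i ∧ rankWithout own i s ≤ t ∧ t < s}

-- With `rk` the rank in `a^opt`, these are the `a`-ranks of `S_{t+1}(a^opt) \ S_{t+1}(a)`;
-- ranks are 0-based, so rank `s` is in `S_{t+1}` iff `s ≤ t`.
def displaced (rk : Fin N → Fin N) (t : ℕ) : Finset (Fin N) :=
  {s | (rk s : ℕ) ≤ t ∧ t < s}

theorem rankWithout_le (own : Fin N → ι) (i : ι) (s : Fin N) : rankWithout own i s ≤ s := by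
  rw [rankWithout, ← Fin.card_Iio]
  exact card_le_card fun s' hs' => by simpa using (mem_filter.1 hs').2.1

theorem rankWithout_eq_sort_symm (own : Fin N → ι) {i : ι} {s : Fin N} (hs : own s ≠ i) :
    ((Tuple.sort fun s => decide (own s = i)).symm s : ℕ) = rankWithout own i s := by
  rw [val_eq_card_filter_lt, rankWithout]
  congr 1
  ext s'
  simp [sort_symm_lt_iff, hs, and_comm]

theorem sum_range_sub_mul_sum_climbers (own : Fin N → ι) (i : ι) (c : ℕ → ℝ) (β : Fin N → ℝ)
    {R : ℕ} (hR : N ≤ R) :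
    ∑ t ∈ range R, (c t - c (t + 1)) * ∑ s ∈ climbers own i t, β s
      = ∑ s, if own s ≠ i then (c (rankWithout own i s) - c s) * β s else 0 := by
  simp_rw [climbers, sum_filter, mul_sum]
  rw [sum_comm]
  refine sum_congr rfl fun s _ => ?_
  split_ifs with hs
  · have hIco : {t ∈ range R | rankWithout own i s ≤ t ∧ t < s} = Ico (rankWithout own i s) s := by
      ext t
      simp only [mem_filter, mem_range, mem_Ico]
      have := s.isLt
      omega
    rw [← sum_Ico_sub_succ c (rankWithout_le own i s), ← hIco, sum_filter, sum_mul]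
    refine sum_congr rfl fun t _ => ?_
    simp [hs]
  · simp [hs]

theorem card_filter_climbers (own : Fin N → ι) (i : ι) {t : ℕ} (ht : t < N) (x : Fin N) :
    #{s ∈ climbers own i t | s ≤ x}
      = min #{s | own s ≠ i ∧ t < (s : ℕ) ∧ s ≤ x} #{s : Fin N | (s : ℕ) ≤ t ∧ own s = i} := by
  set T : Finset (Fin N) := {s | own s ≠ i ∧ t < (s : ℕ) ∧ s ≤ x}
  set o := #{s : Fin N | (s : ℕ) ≤ t ∧ own s = i}
  have htop : #{s' : Fin N | (s' : ℕ) ≤ t ∧ own s' ≠ i} + o = t + 1 := by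
    have hcard : #{s : Fin N | (s : ℕ) ≤ t} = t + 1 := by
      rw [← Fin.card_Iic ⟨t, ht⟩]
      congr 1
      ext s
      simp [Fin.le_def]
    have := card_filter_add_card_filter_not (s := ({s | (s : ℕ) ≤ t} : Finset (Fin N)))
      (fun s => own s ≠ i)
    simp only [filter_filter, not_not] at this
    omega
  have hmemT : ∀ s, s ∈ T ↔ own s ≠ i ∧ t < (s : ℕ) ∧ s ≤ x := by simp [T]
  have hrank : ∀ s ∈ T, rankWithout own i s
      = #{s' : Fin N | (s' : ℕ) ≤ t ∧ own s' ≠ i} + #{s' ∈ T | s' < s} := by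
    intro s hs
    rw [hmemT] at hs
    rw [rankWithout, ← card_union_of_disjoint]
    · congr 1
      ext s'
      simp only [mem_filter, mem_univ, true_and, mem_union, hmemT, Fin.lt_def, Fin.le_def] at hs ⊢
      by_cases h : own s' = i
      · simp [h]
      · simp only [h, ne_eq, not_false_eq_true, and_true, true_and]
        omega
    · refine disjoint_left.2 fun s' h h' => ?_
      simp only [mem_filter, mem_univ, true_and, hmemT] at h h'
      omega
  have hclimb : {s ∈ climbers own i t | s ≤ x} = {s ∈ T | #{s' ∈ T | s' < s} < o} := by
    ext s
    rw [mem_filter, mem_filter, hmemT]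
    simp only [climbers, mem_filter, mem_univ, true_and]
    constructor
    · rintro ⟨⟨hs, hrk, hts⟩, hsx⟩
      have := hrank s ((hmemT s).2 ⟨hs, hts, hsx⟩)
      exact ⟨⟨hs, hts, hsx⟩, by omega⟩
    · rintro ⟨⟨hs, hts, hsx⟩, hlt⟩
      have := hrank s ((hmemT s).2 ⟨hs, hts, hsx⟩)
      exact ⟨⟨hs, by omega, hts⟩, hsx⟩
  rw [hclimb, card_filter_card_filter_lt_lt]

variable [Fintype ι]

theorem card_filter_displaced_le (own : Fin N → ι) (rk : Equiv.Perm (Fin N))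
    (hrk : ∀ s s', s' < s → own s' = own s → rk s' < rk s) (t : ℕ) (x : Fin N) :
    #{s ∈ displaced rk t | s ≤ x} ≤ ∑ i ∈ univ \ {s ∈ displaced rk t | s ≤ x}.image own,
      #{s : Fin N | (s : ℕ) ≤ t ∧ own s = i} := by
  set D := {s ∈ displaced rk t | s ≤ x}
  set A : Finset (Fin N) := {s | (s : ℕ) ≤ t}
  have hmemD : ∀ s, s ∈ D ↔ (rk s : ℕ) ≤ t ∧ t < s ∧ s ≤ x := by simp [D, displaced, and_assoc]
  -- within a bidder `rk` keeps the order, so a displaced item drags its owner's top items along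
  have hsub : {s ∈ A | own s ∈ D.image own} ∪ D ⊆ ({s | (rk s : ℕ) ≤ t} : Finset (Fin N)) := by
    intro s hs
    simp only [mem_union, mem_filter, mem_image, A, mem_univ, true_and] at hs ⊢
    rcases hs with ⟨hst, d, hd, hown⟩ | hs
    · rw [hmemD] at hd
      have : rk s < rk d := hrk d s (Fin.lt_def.2 (by omega)) hown.symm
      exact (Fin.lt_def.1 this).le.trans hd.1
    · exact ((hmemD s).1 hs).1
  have hdisj : Disjoint {s ∈ A | own s ∈ D.image own} D := by
    refine disjoint_left.2 fun s h h' => ?_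
    simp only [mem_filter, A, mem_univ, true_and, hmemD] at h h'
    omega
  have hrkA : #{s | (rk s : ℕ) ≤ t} = #A := card_equiv rk fun s => by simp [A]
  have hsplit := card_filter_add_card_filter_not (s := A) (fun s => own s ∈ D.image own)
  have hfiber : #{s ∈ A | own s ∉ D.image own}
      = ∑ i ∈ univ \ D.image own, #{s : Fin N | (s : ℕ) ≤ t ∧ own s = i} := by
    rw [card_eq_sum_card_fiberwise (f := own) (t := univ \ D.image own)
      fun s hs => by simpa using (mem_filter.1 hs).2]
    refine sum_congr rfl fun i hi => congr_arg card (ext fun s => ?_)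
    simp only [mem_sdiff, mem_univ, true_and] at hi
    simp only [mem_filter, A, mem_univ, true_and]
    constructor
    · exact fun h => ⟨h.1.1, h.2⟩
    · rintro ⟨hst, rfl⟩
      exact ⟨⟨hst, hi⟩, rfl⟩
  have hcard := card_le_card hsub
  rw [card_union_of_disjoint hdisj] at hcard
  omega

theorem card_filter_displaced_le_sum_card_filter_climbers (own : Fin N → ι)
    (rk : Equiv.Perm (Fin N)) (hrk : ∀ s s', s' < s → own s' = own s → rk s' < rk s)
    (t : ℕ) (x : Fin N) :
    #{s ∈ displaced rk t | s ≤ x} ≤ ∑ i, #{s ∈ climbers own i t | s ≤ x} := by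
  set D := {s ∈ displaced rk t | s ≤ x}
  rcases lt_or_ge t N with ht | ht
  swap
  · have : D = ∅ := filter_eq_empty_iff.2 fun s hs => by
      have := s.isLt
      simp only [displaced, mem_filter] at hs
      omega
    simp [this]
  -- only bidders without displaced items are counted; they hold enough of the top `t + 1`
  calc #D = min #D (∑ i ∈ univ \ D.image own, #{s : Fin N | (s : ℕ) ≤ t ∧ own s = i}) :=
        (min_eq_left (card_filter_displaced_le own rk hrk t x)).symm
    _ ≤ ∑ i ∈ univ \ D.image own, min #D #{s : Fin N | (s : ℕ) ≤ t ∧ own s = i} :=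
        min_sum_le_sum_min _ _ _
    _ ≤ ∑ i ∈ univ \ D.image own, #{s ∈ climbers own i t | s ≤ x} := by
        refine sum_le_sum fun i hi => ?_
        rw [card_filter_climbers own i ht x]
        refine min_le_min_right _ (card_le_card fun s hs => ?_)
        have hown : own s ≠ i := fun h => (mem_sdiff.1 hi).2 (mem_image.2 ⟨s, hs, h⟩)
        simp only [D, displaced, mem_filter, mem_univ, true_and] at hs ⊢
        exact ⟨hown, hs.1.2, hs.2⟩
    _ ≤ ∑ i, #{s ∈ climbers own i t | s ≤ x} := sum_le_sum_of_subset (subset_univ _)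

theorem sum_displaced_le_sum_climbers (own : Fin N → ι)
    (rk : Equiv.Perm (Fin N)) (hrk : ∀ s s', s' < s → own s' = own s → rk s' < rk s)
    {β : Fin N → ℝ} (hβ : Antitone β) (hβ0 : ∀ s, 0 ≤ β s) (t : ℕ) :
    ∑ s ∈ displaced rk t, β s ≤ ∑ i, ∑ s ∈ climbers own i t, β s := by
  have hD : ∑ s ∈ displaced rk t, β s = ∑ s, (if s ∈ displaced rk t then 1 else 0) * β s := by
    simp [ite_mul, sum_ite_mem]
  have hC : ∑ i, ∑ s ∈ climbers own i t, β s
      = ∑ s, (∑ i, if s ∈ climbers own i t then 1 else 0) * β s := by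
    simp_rw [sum_mul, ite_mul, one_mul, zero_mul]
    rw [sum_comm]
    simp [sum_ite_mem]
  rw [hD, hC]
  refine sum_mul_le_sum_mul_of_prefix_sum_le univ hβ (fun s _ => hβ0 s) fun x _ => ?_
  have hprefix : ∀ F : Finset (Fin N), #{y ∈ {y | y ≤ x} | y ∈ F} = #{s ∈ F | s ≤ x} := fun F => by
    congr 1
    ext
    simp [and_comm]
  rw [sum_comm, sum_boole]
  simp only [sum_boole, hprefix]
  exact_mod_cast card_filter_displaced_le_sum_card_filter_climbers own rk hrk t x

end Ranks

theorem le_fmax {ι : Type*} {s : Finset ι} (f : ι → ℝ) {x : ι} (hx : x ∈ s) : f x ≤ fmax s f := by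
  have hsup : (s.sup fun i => (f i : WithBot ℝ)) = s.sup' ⟨x, hx⟩ f := (coe_sup' _ f).symm
  rw [fmax, hsup, WithBot.unbotD_coe]
  exact le_sup' f hx

theorem mem_topk {a : Alloc n m} {k : ℕ} {x : Item n m} : x ∈ topk a k ↔ (a.symm x : ℕ) < k := by
  simp only [topk, mem_image, mem_filter, mem_univ, true_and]
  exact ⟨fun ⟨r, hr, hx⟩ => hx ▸ by simpa using hr, fun h => ⟨_, h, a.apply_symm_apply x⟩⟩

theorem sum_topk_perm_trans_sdiff (a : Alloc n m) (σ : Equiv.Perm (Fin (n * m)))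
    (v : Item n m → ℝ) (t : ℕ) :
    ∑ x ∈ topk (σ.trans a) (t + 1) \ topk a (t + 1), v x = ∑ s ∈ displaced σ.symm t, v (a s) := by
  refine Eq.trans ?_ (sum_map _ a.toEmbedding v)
  congr 1
  ext x
  simp only [mem_sdiff, mem_topk, mem_map_equiv, displaced, mem_filter, mem_univ, true_and,
    Equiv.symm_trans_apply]
  omega

theorem wel_le_wel_of_antitone {c : ℕ → ℝ} (hc : Antitone c) {v : Item n m → ℝ} {a : Alloc n m}
    (hv : Antitone fun k => v (a k)) (a' : Alloc n m) : wel c v a' ≤ wel c v a := by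
  have hmv : Monovary (fun k : Fin (n * m) => c k) fun k => v (a k) :=
    (hc.comp_monotone Fin.val_strictMono.monotone).monovary hv
  simpa [wel] using hmv.sum_smul_comp_perm_le_sum_smul (σ := a'.trans a.symm)

theorem bidWelfare_perm_trans (c : ℕ → ℝ) (b : Item n m → ℝ) (a : Alloc n m)
    (σ : Equiv.Perm (Fin (n * m))) :
    bidWelfare c b (σ.trans a) = ∑ s, c (σ.symm s) * b (a s) := by
  rw [bidWelfare, ← σ.symm.sum_comp]
  simp

theorem sum_sub_mul_le_vcgPay (c : ℕ → ℝ) (b : Item n m → ℝ) (a : Alloc n m) (i : Fin n) :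
    ∑ s, (if (a s).1 ≠ i then (c (rankWithout (fun s => (a s).1) i s) - c s) * b (a s) else 0)
      ≤ vcgPay c b a i := by
  -- compare with the allocation that moves bidder `i`'s items to the bottom, keeping the order
  set τ := Tuple.sort fun s => decide ((a s).1 = i)
  have hopt : bidWelfare c (exclBids b i) (τ.trans a) ≤ woptWithout c b i :=
    le_fmax _ (mem_univ _)
  have hmoved : bidWelfare c (exclBids b i) (τ.trans a)
      = ∑ s, if (a s).1 ≠ i then c (rankWithout (fun s => (a s).1) i s) * b (a s) else 0 := by
    rw [bidWelfare_perm_trans]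
    refine sum_congr rfl fun s _ => ?_
    by_cases h : (a s).1 = i
    · simp [exclBids, h]
    · simp [exclBids, h, τ, rankWithout_eq_sort_symm (fun s => (a s).1) h]
  have hdiff : ∑ s, (if (a s).1 ≠ i then (c (rankWithout (fun s => (a s).1) i s) - c s) * b (a s)
      else 0) = bidWelfare c (exclBids b i) (τ.trans a) - othersWelfare c b a i := by
    rw [hmoved, othersWelfare, ← sum_sub_distrib]
    refine sum_congr rfl fun s _ => ?_
    split_ifs <;> ring
  rw [hdiff, vcgPay]
  linarith

theorem value_le_of_validUnder {v : Item n m → ℝ} {α : Fin n → ℝ} (hα : ∀ i, 0 < α i)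
    {a : Alloc n m} (ha : ValidUnder (fun x => α x.1 * v x) a) {s s' : Fin (n * m)}
    (hle : s' ≤ s) (hown : (a s').1 = (a s).1) : v (a s) ≤ v (a s') := by
  have hbid : α (a s).1 * v (a s) ≤ α (a s').1 * v (a s') := ha s' s hle
  rw [hown] at hbid
  exact le_of_mul_le_mul_left hbid (hα _)

theorem wel_le_wel_sort_trans {c : ℕ → ℝ} (hc : Antitone c) (v : Item n m → ℝ) (a a' : Alloc n m) :
    wel c v a' ≤ wel c v ((Tuple.sort fun s => OrderDual.toDual (v (a s))).trans a) := by
  refine wel_le_wel_of_antitone hc (fun _ _ h => ?_) a'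
  exact OrderDual.toDual_le_toDual.1 (Tuple.monotone_sort (fun s => OrderDual.toDual (v (a s))) h)

theorem sort_symm_lt_of_validUnder {v : Item n m → ℝ} {α : Fin n → ℝ} (hα : ∀ i, 0 < α i)
    {a : Alloc n m} (ha : ValidUnder (fun x => α x.1 * v x) a) {s s' : Fin (n * m)}
    (hlt : s' < s) (hown : (a s').1 = (a s).1) :
    (Tuple.sort fun s => OrderDual.toDual (v (a s))).symm s'
      < (Tuple.sort fun s => OrderDual.toDual (v (a s))).symm s := by
  rw [sort_symm_lt_iff]
  exact (OrderDual.toDual_le_toDual.2 (value_le_of_validUnder hα ha hlt.le hown)).lt_or_eq.imp id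
    fun h => ⟨h, hlt⟩

theorem vcg_revenue_covers_displaced_value_general
    (n m K : ℕ) (v : Item n m → ℝ) (c : ℕ → ℝ)
    (hv : ∀ x : Item n m, 0 ≤ v x)
    (hcmono : Antitone c)
    (α : Fin n → ℝ) (hα : ∀ i, 1 ≤ α i)
    (a : Alloc n m) (ha : ValidUnder (fun x => α x.1 * v x) a) :
    ∃ aopt : Alloc n m,
      (∀ a' : Alloc n m, wel c v a' ≤ wel c v aopt) ∧
      ∑ t ∈ Finset.range K, (c t - c (t + 1)) *
          ∑ x ∈ topk aopt (t + 1) \ topk a (t + 1), v x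
        ≤ ∑ i : Fin n, vcgPay c (fun x => α x.1 * v x) a i := by
  set own : Fin (n * m) → Fin n := fun s => (a s).1
  set β : Fin (n * m) → ℝ := fun s => α (own s) * v (a s)
  set σ := Tuple.sort fun s => OrderDual.toDual (v (a s))
  have hβ0 : ∀ s, 0 ≤ β s := fun s => mul_nonneg (zero_le_one.trans (hα _)) (hv _)
  have hrk : ∀ s s', s' < s → own s' = own s → σ.symm s' < σ.symm s := fun _ _ =>
    sort_symm_lt_of_validUnder (fun i => zero_lt_one.trans_le (hα i)) ha
  have hcoef : ∀ t, 0 ≤ c t - c (t + 1) := fun t => sub_nonneg.2 (hcmono t.le_succ)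
  refine ⟨σ.trans a, fun a' => wel_le_wel_sort_trans hcmono v a a', ?_⟩
  calc _ = ∑ t ∈ range K, (c t - c (t + 1)) * ∑ s ∈ displaced σ.symm t, v (a s) := by
        simp only [sum_topk_perm_trans_sdiff]
    _ ≤ ∑ t ∈ range K, (c t - c (t + 1)) * ∑ i, ∑ s ∈ climbers own i t, β s := by
        refine sum_le_sum fun t _ => mul_le_mul_of_nonneg_left ?_ (hcoef t)
        exact (sum_le_sum fun s _ => le_mul_of_one_le_left (hv _) (hα _)).trans
          (sum_displaced_le_sum_climbers own σ.symm hrk ha hβ0 t)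
    _ ≤ ∑ t ∈ range (max K (n * m)), (c t - c (t + 1)) * ∑ i, ∑ s ∈ climbers own i t, β s :=
        sum_le_sum_of_subset_of_nonneg (range_subset_range.2 (le_max_left _ _)) fun t _ _ =>
          mul_nonneg (hcoef t) (sum_nonneg fun i _ => sum_nonneg fun s _ => hβ0 s)
    _ = ∑ i, ∑ s, if own s ≠ i then (c (rankWithout own i s) - c s) * β s else 0 := by
        simp_rw [mul_sum]
        rw [sum_comm]
        refine sum_congr rfl fun i _ => ?_
        rw [← sum_range_sub_mul_sum_climbers own i c β (le_max_right K _)]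
        simp_rw [mul_sum]
    _ ≤ _ := sum_le_sum fun i _ => sum_sub_mul_le_vcgPay c (fun x => α x.1 * v x) a i

/-- Revenue lemma for VCG: there is an optimal allocation whose displaced items'
layered value is covered by the revenue. -/
theorem vcg_revenue_covers_displaced_value
    (n m K : ℕ) (v : Item n m → ℝ) (c : ℕ → ℝ)
    (hv : ∀ x : Item n m, 0 ≤ v x)
    (hvmono : ∀ (i : Fin n) (j j' : Fin m), j ≤ j' → v (i, j') ≤ v (i, j))
    (hc1 : c 0 ≤ 1) (hc0 : ∀ k, 0 ≤ c k) (hcmono : Antitone c)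
    (hcK : ∀ k, K ≤ k → c k = 0)
    (α : Fin n → ℝ) (hα : ∀ i, 1 ≤ α i)
    (a : Alloc n m) (ha : ValidUnder (fun x => α x.1 * v x) a) :
    ∃ aopt : Alloc n m,
      (∀ a' : Alloc n m, wel c v a' ≤ wel c v aopt) ∧
      ∑ t ∈ Finset.range K, (c t - c (t + 1)) *
          ∑ x ∈ topk aopt (t + 1) \ topk a (t + 1), v x
        ≤ ∑ i : Fin n, vcgPay c (fun x => α x.1 * v x) a i :=
  vcg_revenue_covers_displaced_value_general n m K v c hv hcmono α hα a ha

end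
end SponsoredShopping
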